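/- Let S be a finite nonempty set and f : S → ZMod 2 with exactly one quarter of the elements marked: 4 · |{s ∈ S | f s = 1}| = |S|. For s ∈ S define the single-shot Grover amplitude a(s) = (1/√|S|) · ((-1 : ℝ)^{(f s).val} − (2/|S|) · ∑_{t ∈ S} (-1)^{(f t).val}). Then a(s) = 0 for every unmarked s (those with f s = 0), and ∑_{s ∈ S, f s = 1} a(s)² = 1. (Hence a single iteration of Grover's algorithm returns a marked element with certainty.) -/

import Mathlib

/-! With `N = |S|` and `M` marked elements, `(2/N) ∑ₜ (-1)^{f t} = 2(N - 2M)/N`, which is `1`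
exactly when `N = 4M`. The diffusion then subtracts `1/√N` from every oracle amplitude `±1/√N`:
unmarked amplitudes vanish and the `M` marked ones become `-2/√N`, of total weight `4M/N = 1`. -/

open Finset

lemma neg_one_pow_zmod_two_val {R : Type*} [Ring R] (x : ZMod 2) :
    (-1 : R) ^ x.val = 1 - 2 * if x = 1 then 1 else 0 := by
  obtain rfl | rfl : x = 0 ∨ x = 1 := by decide +revert
  · simp
  · rw [if_pos rfl, ZMod.val_one]
    norm_num

lemma sum_neg_one_pow_zmod_two_val {R : Type*} [CommRing R] {S : Type*} [Fintype S]
    (f : S → ZMod 2) :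
    ∑ t : S, (-1 : R) ^ (f t).val = Fintype.card S - 2 * #{s | f s = 1} := by
  simp only [neg_one_pow_zmod_two_val, sum_sub_distrib, ← mul_sum, sum_boole, sum_const,
    card_univ, nsmul_eq_mul, mul_one]

lemma two_div_card_mul_sum_neg_one_pow_zmod_two_val {S : Type*} [Fintype S] [Nonempty S]
    (f : S → ZMod 2) (hquarter : 4 * #{s | f s = 1} = Fintype.card S) :
    (2 / (Fintype.card S : ℝ)) * ∑ t : S, (-1 : ℝ) ^ (f t).val = 1 := by
  have hcard : (Fintype.card S : ℝ) = 4 * #{s | f s = 1} := by exact_mod_cast hquarter.symm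
  have hM : (#{s | f s = 1} : ℝ) ≠ 0 := by
    have := Fintype.card_pos (α := S)
    exact Nat.cast_ne_zero.mpr (by omega)
  rw [sum_neg_one_pow_zmod_two_val, hcard]
  field_simp
  ring

theorem stmt14 {S : Type*} [Fintype S] [Nonempty S] (f : S → ZMod 2)
    (hquarter : 4 * (Finset.univ.filter (fun s : S => f s = 1)).card = Fintype.card S)
    (a : S → ℝ)
    (ha : ∀ s : S, a s = (1 / Real.sqrt (Fintype.card S)) *
        ((-1 : ℝ) ^ (f s).val
          - (2 / (Fintype.card S : ℝ)) * ∑ t : S, (-1 : ℝ) ^ (f t).val)) :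
    (∀ s : S, f s = 0 → a s = 0) ∧
    ∑ s ∈ Finset.univ.filter (fun s : S => f s = 1), (a s) ^ 2 = 1 := by
  have hshift : ∀ s, a s = (1 / Real.sqrt (Fintype.card S)) * ((-1 : ℝ) ^ (f s).val - 1) := by
    intro s
    rw [ha, two_div_card_mul_sum_neg_one_pow_zmod_two_val f hquarter]
  have hcard : (Fintype.card S : ℝ) = 4 * #{s | f s = 1} := by exact_mod_cast hquarter.symm
  have hpos : (0 : ℝ) < Fintype.card S := by exact_mod_cast Fintype.card_pos
  have hmarked : ∀ s ∈ ({s | f s = 1} : Finset S), a s ^ 2 = 4 / Fintype.card S := by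
    intro s hs
    rw [hshift, (mem_filter.mp hs).2, ZMod.val_one, mul_pow, div_pow, Real.sq_sqrt hpos.le]
    ring
  refine ⟨fun s hs => by simp [hshift, hs], ?_⟩
  rw [sum_congr rfl hmarked, sum_const, nsmul_eq_mul, mul_div_assoc', div_eq_one_iff_eq hpos.ne',
    hcard]
  ring
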